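/- arXiv:2209.15577 — 4 statements merged into one kernel-verified Lean document; each statement's English description precedes it below -/
import Mathlib

section
/- For every half ribbon 1-knot K and every ω on the unit circle with ω ≠ 1, the half fusion number satisfies f_h(K) ≥ |σ_ω(K)|, where σ_ω is the Levine–Tristram signature. -/
/-- For every half ribbon 1-knot `K` and every `ω` on the unit circle
with `ω ≠ 1`, the half fusion number satisfies `f_h(K) ≥ |σ_ω(K)|`, where `σ_ω`
is the Levine–Tristram signature.

`fh K` is the least fusion number over ribbon 2-knots divided by `K`.  `Link` is
the type of links in `S³`, `SKnot` that of closed surface-knots in `S⁴`,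
`SplitUnlink K L` means `L` is the split union of `K` with an unlink, `gds1` the
weak doubly slice genus of a link.  Given facts: (a) a ribbon 2-knot `S` divided
by `K` can be converted to a trivial surface-knot of genus `fusion S` divided by
a split union of `K` with an unlink (Miyazaki); (b) `|σ_ω(L)| ≤ g¹_ds(L) ≤ genus S'`
for any trivial surface-knot `S'` divided by `L` (Conway–Orson); (c) `σ_ω` is
additive under split union with an unlink, whose signature vanishes. -/
theorem half_fusion_number_signature_bound
    (Knot Knot2 Link SKnot : Type)
    (IsRibbon2 : Knot2 → Prop)
    (Divides : Knot → Knot2 → Prop)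
    (DividesL : Link → SKnot → Prop)
    (TrivialSK : SKnot → Prop)
    (genus : SKnot → ℕ)
    (fusion : Knot2 → ℕ)
    (fh : Knot → ℕ)
    (SplitUnlink : Knot → Link → Prop)
    (sigma : ℂ → Knot → ℤ)
    (sigmaL : ℂ → Link → ℤ)
    (gds1 : Link → ℕ)
    (hfh : ∀ K : Knot, (∃ S : Knot2, IsRibbon2 S ∧ Divides K S) →
      IsLeast {n : ℕ | ∃ S : Knot2, IsRibbon2 S ∧ Divides K S ∧ fusion S = n} (fh K))
    (hmiyazaki : ∀ (K : Knot) (S : Knot2), IsRibbon2 S → Divides K S →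
      ∃ (S' : SKnot) (L : Link), TrivialSK S' ∧ genus S' = fusion S ∧
        SplitUnlink K L ∧ DividesL L S')
    (hconwayorson : ∀ (ω : ℂ) (L : Link) (S' : SKnot), ‖ω‖ = 1 → ω ≠ 1 →
      TrivialSK S' → DividesL L S' →
      |sigmaL ω L| ≤ (gds1 L : ℤ) ∧ gds1 L ≤ genus S')
    (hadd : ∀ (ω : ℂ) (K : Knot) (L : Link), SplitUnlink K L →
      sigmaL ω L = sigma ω K) :
    ∀ K : Knot, (∃ S : Knot2, IsRibbon2 S ∧ Divides K S) →
      ∀ ω : ℂ, ‖ω‖ = 1 → ω ≠ 1 → |sigma ω K| ≤ (fh K : ℤ) := by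
  intro K hK ω hω hω1
  obtain ⟨S, hS, hKS, hfS⟩ := (hfh K hK).1
  obtain ⟨S', L, hT, hg, hSU, hDL⟩ := hmiyazaki K S hS hKS
  obtain ⟨h1, h2⟩ := hconwayorson ω L S' hω hω1 hT hDL
  rw [hadd ω K L hSU] at h1
  calc |sigma ω K| ≤ (gds1 L : ℤ) := h1
    _ ≤ (genus S' : ℤ) := by exact_mod_cast h2
    _ = (fh K : ℤ) := by rw [hg, hfS]
end

section
/- For all integers 0 ≤ M < N there exists a ribbon 1-knot K with half fusion number f_h(K) = M and fusion number f(K) ≥ N. -/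
/-- For all integers `0 ≤ M < N` there exists a ribbon 1-knot `K`
with half fusion number `f_h(K) = M` and fusion number `f(K) ≥ N`.

`C p q = T_{p,q} # mirror(T_{p,q})`, `eight20` is `8₂₀`, `csum` is connected sum,
`iter n K` the `n`-fold connected sum `#ⁿ K` (with `iter 0 K` the unknot),
`Ord` the Juhász–Miller–Zemke invariant, `f` the fusion number, `fh` the half
fusion number, and `sigma` the Levine–Tristram signature at `ω = e^{πi/3}`.
Given facts: (a) `C p q` is ribbon and doubly slice so `f_h(C p q) = 0`, and
`Ord (C p q) = min p q − 1`; (b) `σ(8₂₀) = 1`, `f_h(8₂₀) = f(8₂₀) = 1` and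
`8₂₀` is ribbon; (c) `Ord` of a connected sum is the max; (d) `f_h` is
subadditive under connected sum, `|σ| ≤ f_h`, `σ` is additive under connected
sum, `Ord ≤ f` for ribbon knots, `f_h ≤ f`, and ribbonness is preserved by
connected sum and iterated connected sum. -/
theorem half_fusion_vs_fusion_gap
    (Knot : Type)
    (RibbonKnot : Knot → Prop)
    (C : ℕ → ℕ → Knot)
    (eight20 : Knot)
    (csum : Knot → Knot → Knot)
    (iter : ℕ → Knot → Knot)
    (Ord f fh : Knot → ℕ)
    (sigma : Knot → ℤ)
    (ha : ∀ p q : ℕ, RibbonKnot (C p q) ∧ fh (C p q) = 0 ∧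
      Ord (C p q) = min p q - 1)
    (hb : sigma eight20 = 1 ∧ fh eight20 = 1 ∧ f eight20 = 1 ∧
      RibbonKnot eight20)
    (hOrdSum : ∀ K₁ K₂ : Knot, Ord (csum K₁ K₂) = max (Ord K₁) (Ord K₂))
    (hfhSub : ∀ K₁ K₂ : Knot, fh (csum K₁ K₂) ≤ fh K₁ + fh K₂)
    (hsigBound : ∀ K : Knot, |sigma K| ≤ (fh K : ℤ))
    (hsigSum : ∀ K₁ K₂ : Knot, sigma (csum K₁ K₂) = sigma K₁ + sigma K₂)
    (hsigIter : ∀ (n : ℕ) (K : Knot), sigma (iter n K) = n * sigma K)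
    (hOrdBound : ∀ K : Knot, RibbonKnot K → Ord K ≤ f K)
    (hfhf : ∀ K : Knot, RibbonKnot K → fh K ≤ f K)
    (hRibSum : ∀ K₁ K₂ : Knot, RibbonKnot K₁ → RibbonKnot K₂ →
      RibbonKnot (csum K₁ K₂))
    (hRibIter : ∀ (n : ℕ) (K : Knot), RibbonKnot K → RibbonKnot (iter n K)) :
    ∀ M N : ℕ, M < N →
      ∃ K : Knot, RibbonKnot K ∧ fh K = M ∧ N ≤ f K := by
  intro M N hMN
  obtain ⟨hs8, hfh8, hf8, hr8⟩ := hb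
  -- iterated connected sum via csum directly
  let A : ℕ → Knot := fun m => Nat.rec (C (N+1) (N+1)) (fun _ K => csum K eight20) m
  have hA0 : A 0 = C (N+1) (N+1) := rfl
  have hAsucc : ∀ m, A (m+1) = csum (A m) eight20 := fun m => rfl
  have hrib : ∀ m, RibbonKnot (A m) := by
    intro m
    induction m with
    | zero => exact (ha (N+1) (N+1)).1
    | succ m ih => exact hRibSum _ _ ih hr8
  have hsigC : sigma (C (N+1) (N+1)) = 0 := by
    have h1 := hsigBound (C (N+1) (N+1))
    have h2 := (ha (N+1) (N+1)).2.1
    rw [h2] at h1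
    simpa using abs_nonpos_iff.mp (by exact_mod_cast h1)
  have hsigA : ∀ m, sigma (A m) = m := by
    intro m
    induction m with
    | zero => simpa [hA0] using hsigC
    | succ m ih =>
      rw [hAsucc, hsigSum, ih, hs8]
      push_cast; ring
  have hfhle : ∀ m, fh (A m) ≤ m := by
    intro m
    induction m with
    | zero => simp [hA0, (ha (N+1) (N+1)).2.1]
    | succ m ih =>
      calc fh (A (m+1)) ≤ fh (A m) + fh eight20 := hfhSub _ _
        _ ≤ m + 1 := by rw [hfh8]; omega
  have hfhge : ∀ m : ℕ, (m : ℤ) ≤ fh (A m) := by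
    intro m
    have := hsigBound (A m)
    rw [hsigA m] at this
    calc (m : ℤ) ≤ |(m : ℤ)| := le_abs_self _
      _ ≤ fh (A m) := this
  have hOrdA : ∀ m, N ≤ Ord (A m) := by
    intro m
    induction m with
    | zero =>
      show N ≤ Ord (C (N+1) (N+1))
      rw [(ha (N+1) (N+1)).2.2]
      omega
    | succ m ih =>
      rw [hAsucc, hOrdSum]
      exact le_max_of_le_left ih
  refine ⟨A M, hrib M, ?_, ?_⟩
  · have h1 := hfhle M
    have h2 := hfhge M
    omega
  · exact le_trans (hOrdA M) (hOrdBound _ (hrib M))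
end

section
/- The difference f(K) − g_ds(K) between fusion number and doubly slice genus can be made arbitrarily large over ribbon 1-knots: for every N there is a ribbon knot K with f(K) ≥ N and g_ds(K) ≤ M for any fixed bound arising from the construction K = C_{p,q} # (#^M 8₂₀). -/
/-- The difference `f(K) − g_ds(K)` between fusion number and doubly
slice genus can be made arbitrarily large over ribbon 1-knots: for every `N`
(and any fixed `M`) there is a ribbon knot `K`, namely `K = C_{p,q} # (#^M 8₂₀)`
with `min{p,q} − 1 ≥ N`, with `f(K) ≥ N` and `g_ds(K) ≤ M`.

Given facts: `g_ds(C p q) = 0` (`C p q` is doubly slice), `g_ds(8₂₀) = 1`,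
`g_ds` is subadditive under connected sum (and iterated connected sum), and
`f ≥ Ord` with `Ord (C p q # J) = max {Ord (C p q), Ord J} = min{p,q} − 1`
by the Juhász–Miller–Zemke bound and the max formula for `Ord`. -/
theorem fusion_minus_gds_unbounded
    (Knot : Type)
    (RibbonKnot : Knot → Prop)
    (C : ℕ → ℕ → Knot)
    (eight20 : Knot)
    (csum : Knot → Knot → Knot)
    (iter : ℕ → Knot → Knot)
    (Ord f gds : Knot → ℕ)
    (hC : ∀ p q : ℕ, RibbonKnot (C p q) ∧ gds (C p q) = 0 ∧
      Ord (C p q) = min p q - 1)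
    (h820 : RibbonKnot eight20 ∧ gds eight20 = 1)
    (hgdsSub : ∀ K₁ K₂ : Knot, gds (csum K₁ K₂) ≤ gds K₁ + gds K₂)
    (hgdsIter : ∀ (n : ℕ) (K : Knot), gds (iter n K) ≤ n * gds K)
    (hOrdSum : ∀ K₁ K₂ : Knot, Ord (csum K₁ K₂) = max (Ord K₁) (Ord K₂))
    (hOrdBound : ∀ K : Knot, RibbonKnot K → Ord K ≤ f K)
    (hRibSum : ∀ K₁ K₂ : Knot, RibbonKnot K₁ → RibbonKnot K₂ →
      RibbonKnot (csum K₁ K₂))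
    (hRibIter : ∀ (n : ℕ) (K : Knot), RibbonKnot K → RibbonKnot (iter n K)) :
    ∀ M N : ℕ, ∃ K : Knot, RibbonKnot K ∧ N ≤ f K ∧ gds K ≤ M := by
  intro M N
  obtain ⟨hCr, hCg, hCo⟩ := hC (N+1) (N+1)
  refine ⟨csum (C (N+1) (N+1)) (iter M eight20),
    hRibSum _ _ hCr (hRibIter M _ h820.1), ?_, ?_⟩
  · calc N = min (N+1) (N+1) - 1 := by simp
      _ = Ord (C (N+1) (N+1)) := hCo.symm
      _ ≤ max (Ord (C (N+1) (N+1))) (Ord (iter M eight20)) := le_max_left _ _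
      _ = Ord (csum (C (N+1) (N+1)) (iter M eight20)) := (hOrdSum _ _).symm
      _ ≤ f _ := hOrdBound _ (hRibSum _ _ hCr (hRibIter M _ h820.1))
  · calc gds (csum (C (N+1) (N+1)) (iter M eight20))
        ≤ gds (C (N+1) (N+1)) + gds (iter M eight20) := hgdsSub _ _
      _ ≤ 0 + M * gds eight20 := by
          exact Nat.add_le_add (le_of_eq hCg) (hgdsIter M _)
      _ = M := by rw [h820.2]; simp
end

section
/- If there is a ribbon concordance C from K to J with s saddles and d deaths, then g_ds(J) − s ≤ g_ds(K) ≤ g_ds(J) + s. -/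
/-- If there is a ribbon concordance `C` from `K` to `J` with `s`
saddles and `d` deaths, then `g_ds(J) − s ≤ g_ds(K) ≤ g_ds(J) + s`.

`RibbonConc K J s d` means there is a ribbon concordance from `K` to `J` with
`s` saddles and `d` deaths; `gds` is the doubly slice genus, characterised as a
least element.  Given facts (from realising the concordance on surface-knots):
(`hfwd`) if `J` divides a trivial surface-knot `S`, then `K` divides a trivial
surface-knot of genus `genus S + s` (attach `s − d` 1-handles, join the `d`
trivial 2-knots by trivial 1-handles, then attach the `d` tube-sum 1-handles);
(`hrev`) the reverse concordance symmetrically gives: if `K` divides a trivial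
surface-knot `S`, then `J` divides a trivial surface-knot of genus `genus S + s`. -/
theorem doubly_slice_genus_ribbon_concordance_bound
    (Knot SKnot : Type)
    (genus : SKnot → ℕ)
    (TrivialSK : SKnot → Prop)
    (Divides : Knot → SKnot → Prop)
    (RibbonConc : Knot → Knot → ℕ → ℕ → Prop)
    (gds : Knot → ℕ)
    (hgds : ∀ K : Knot,
      IsLeast {n : ℕ | ∃ S : SKnot, TrivialSK S ∧ Divides K S ∧ genus S = n} (gds K))
    (hfwd : ∀ (K J : Knot) (s d : ℕ) (S : SKnot), RibbonConc K J s d →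
      TrivialSK S → Divides J S →
      ∃ S' : SKnot, TrivialSK S' ∧ Divides K S' ∧ genus S' = genus S + s)
    (hrev : ∀ (K J : Knot) (s d : ℕ) (S : SKnot), RibbonConc K J s d →
      TrivialSK S → Divides K S →
      ∃ S' : SKnot, TrivialSK S' ∧ Divides J S' ∧ genus S' = genus S + s) :
    ∀ (K J : Knot) (s d : ℕ), RibbonConc K J s d →
      gds J ≤ gds K + s ∧ gds K ≤ gds J + s := by
  intro K J s d hC
  obtain ⟨hKmem, hKlb⟩ := hgds K
  obtain ⟨hJmem, hJlb⟩ := hgds J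
  constructor
  · obtain ⟨S, hT, hD, hg⟩ := hKmem
    obtain ⟨S', hT', hD', hg'⟩ := hrev K J s d S hC hT hD
    have := hJlb ⟨S', hT', hD', rfl⟩
    omega
  · obtain ⟨S, hT, hD, hg⟩ := hJmem
    obtain ⟨S', hT', hD', hg'⟩ := hfwd K J s d S hC hT hD
    have := hKlb ⟨S', hT', hD', rfl⟩
    omega
end
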